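/- Assume q is divisible by 4 and Λ > q/2. Let r = 1/q − 1/(2Λ) and c_m = (2m+1)/q for integers m with 0 ≤ m < q/4. Then: (i) p vanishes identically on [c_m − r, c_m + r] ∩ [0,1/2] for each such m; (ii) every nonempty open interval J ⊆ (0,1/2) on which p is constant is contained in some [c_m − r, c_m + r], and the constant value of p on J is 0. -/

import Mathlib

/-!
Since `4 ∣ q`, the coefficient `c_{a/q}(k)` vanishes for odd `k` and has modulus `√2` for even
`k`; since `Λ > q/2`, the window `I(x)` has length `q/Λ < 2` and so contains at most one even
integer. Hence `p(x) = (8Λ/q) sin²(2πNΛ(x - k/q))` when an even `k` lies in `I(x)`, and `p(x) = 0`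
otherwise; at the boundary of the window the sine is `sin(±πN) = 0`. So `p` vanishes wherever
`xq` keeps distance `≥ q/(2Λ)` from every even integer, i.e. on the bands around the odd
integers `2m + 1`. Conversely, `sin²` of a non-constant affine function is not locally constant,
so on an interval where `p` is constant no even integer enters the interior of the window, and by
connectedness the whole interval lies in a single band.
-/

noncomputable def e (x : ℝ) : ℂ := Complex.exp (2 * Real.pi * Complex.I * x)

noncomputable def G (a k : ℤ) (q : ℕ) : ℂ :=
  ∑ ℓ ∈ Finset.range q, e (((a * ℓ ^ 2 + k * ℓ : ℤ) : ℝ) / q)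

noncomputable def invMod (a : ℤ) (q : ℕ) : ℕ := ZMod.val ((a : ZMod q)⁻¹)

noncomputable def cc (a : ℤ) (q : ℕ) (k : ℤ) : ℂ :=
  if Odd q then e ((invMod (4 * a) q : ℝ) * (k : ℝ) ^ 2 / q)
  else if Even (k + (q : ℤ) / 2) then
    (Real.sqrt 2 : ℂ) * e ((invMod a q : ℝ) * (k : ℝ) ^ 2 / (4 * q))
  else 0

noncomputable def Iset (Λ : ℝ) (q : ℕ) (x : ℝ) : Finset ℤ :=
  Finset.Icc ⌈x * q - q / (2 * Λ)⌉ ⌊x * q + q / (2 * Λ)⌋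

noncomputable def pden (N q : ℕ) (Λ : ℝ) (a : ℤ) (x : ℝ) : ℝ :=
  (4 * Λ / q) * (Norm.norm (∑ k ∈ Iset Λ q x,
    cc a q k * (Real.sin (2 * Real.pi * N * Λ * (x - k / q)) : ℂ))) ^ 2

noncomputable def Splus (N q : ℕ) (Λ : ℝ) (a : ℤ) (x : ℝ) : ℂ :=
  ∑ k ∈ Iset Λ q x, cc a q k * e (N * Λ * k / q)

noncomputable def Sminus (N q : ℕ) (Λ : ℝ) (a : ℤ) (x : ℝ) : ℂ :=
  ∑ k ∈ Iset Λ q x, cc a q k * e (-(N * Λ * k / q))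

def Nonsingular (Λ : ℝ) (q : ℕ) (x : ℝ) : Prop :=
  (Odd q → ∀ n : ℤ, x * q - q / (2 * Λ) ≠ n ∧ x * q + q / (2 * Λ) ≠ n) ∧
  (Even q → ∀ n : ℤ, Even n →
    x * q - q / (2 * Λ) + q / 2 ≠ n ∧ x * q + q / (2 * Λ) + q / 2 ≠ n)

noncomputable def Dnear (x : ℝ) : ℝ := |x - round x|

open Set Filter Topology

lemma norm_e (x : ℝ) : ‖e x‖ = 1 := by
  rw [e, show 2 * Real.pi * Complex.I * x = ((2 * Real.pi * x : ℝ) : ℂ) * Complex.I by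
    push_cast; ring]
  exact Complex.norm_exp_ofReal_mul_I _

lemma not_odd_of_four_dvd {q : ℕ} (h4 : 4 ∣ q) : ¬Odd q :=
  Nat.not_odd_iff_even.2 (even_iff_two_dvd.2 ((by norm_num : 2 ∣ 4).trans h4))

lemma even_add_half_iff {q : ℕ} (h4 : 4 ∣ q) (k : ℤ) : Even (k + (q : ℤ) / 2) ↔ Even k := by
  obtain ⟨t, rfl⟩ := h4
  have : Even ((↑(4 * t) : ℤ) / 2) := ⟨t, by push_cast; omega⟩
  rw [Int.even_add]
  tauto

lemma cc_eq_zero_of_not_even {q : ℕ} (h4 : 4 ∣ q) (a : ℤ) {k : ℤ} (hk : ¬Even k) :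
    cc a q k = 0 := by
  rw [cc, if_neg (not_odd_of_four_dvd h4), if_neg (by rwa [even_add_half_iff h4])]

lemma norm_cc_of_even {q : ℕ} (h4 : 4 ∣ q) (a : ℤ) {k : ℤ} (hk : Even k) : ‖cc a q k‖ = √2 := by
  rw [cc, if_neg (not_odd_of_four_dvd h4), if_pos (by rwa [even_add_half_iff h4]), norm_mul,
    norm_e, mul_one, Complex.norm_real, Real.norm_of_nonneg (Real.sqrt_nonneg 2)]

lemma mem_Iset (Λ : ℝ) (q : ℕ) (x : ℝ) (k : ℤ) :
    k ∈ Iset Λ q x ↔ |x * q - k| ≤ q / (2 * Λ) := by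
  rw [Iset, Finset.mem_Icc, Int.ceil_le, Int.le_floor, abs_sub_le_iff]
  constructor <;> rintro ⟨h₁, h₂⟩ <;> constructor <;> linarith

lemma sin_eq_zero_of_abs_eq (N : ℕ) {q : ℕ} {Λ x : ℝ} {k : ℤ} (hq : 0 < q) (hΛ : 0 < Λ)
    (h : |x * q - k| = q / (2 * Λ)) : Real.sin (2 * Real.pi * N * Λ * (x - k / q)) = 0 := by
  have hq' : (0 : ℝ) < q := Nat.cast_pos.2 hq
  rw [Real.sin_eq_zero_iff, show x - k / q = (x * q - k) / q by field_simp]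
  rcases (abs_eq (by positivity)).1 h with h' | h'
  · exact ⟨N, by rw [h']; field_simp; push_cast; ring⟩
  · exact ⟨-N, by rw [h']; field_simp; push_cast; ring⟩

lemma pden_eq_zero_of_forall_even_le (N : ℕ) (a : ℤ) {q : ℕ} {Λ x : ℝ} (hq : 0 < q)
    (hΛ : 0 < Λ) (h4 : 4 ∣ q) (hfar : ∀ k : ℤ, Even k → (q : ℝ) / (2 * Λ) ≤ |x * q - k|) :
    pden N q Λ a x = 0 := by
  rw [pden, Finset.sum_eq_zero fun k hk => ?_]
  · simp
  by_cases hk' : Even k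
  · rw [sin_eq_zero_of_abs_eq N hq hΛ (le_antisymm ((mem_Iset ..).1 hk) (hfar k hk')),
      Complex.ofReal_zero, mul_zero]
  · rw [cc_eq_zero_of_not_even h4 a hk', zero_mul]

lemma pden_eq_sin_sq (N : ℕ) (a : ℤ) {q : ℕ} {Λ x : ℝ} (h4 : 4 ∣ q) (hΛ : (q : ℝ) / 2 < Λ)
    {k₀ : ℤ} (hk₀ : Even k₀) (hnear : |x * q - k₀| ≤ q / (2 * Λ)) :
    pden N q Λ a x = 8 * Λ / q * Real.sin (2 * Real.pi * N * Λ * (x - k₀ / q)) ^ 2 := by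
  have hΛ₀ : 0 < Λ := by linarith [(by positivity : (0 : ℝ) ≤ q / 2)]
  rw [pden, Finset.sum_eq_single_of_mem k₀ ((mem_Iset ..).2 hnear) fun k hk hne => ?_]
  · rw [norm_mul, norm_cc_of_even h4 a hk₀, Complex.norm_real, Real.norm_eq_abs, mul_pow,
      Real.sq_sqrt zero_le_two, sq_abs]
    ring
  by_cases hk' : Even k
  · have hclose : |(k : ℝ) - k₀| < 2 := by
      rw [mem_Iset] at hk
      have : (q : ℝ) / (2 * Λ) < 1 := by rw [div_lt_one (by positivity)]; linarith
      calc |(k : ℝ) - k₀| = |(x * q - k₀) - (x * q - k)| := by ring_nf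
        _ ≤ |x * q - k₀| + |x * q - k| := abs_sub _ _
        _ < 2 := by linarith
    have hclose' : |k - k₀| < 2 := by exact_mod_cast hclose
    obtain ⟨c, rfl⟩ := hk'
    obtain ⟨d, rfl⟩ := hk₀
    rw [abs_lt] at hclose'
    omega
  · rw [cc_eq_zero_of_not_even h4 a hk', zero_mul]

lemma eq_zero_of_eventually_sin_affine_eq_zero {α γ x : ℝ}
    (h : ∀ᶠ y in 𝓝 x, Real.sin (α * y + γ) = 0) : α = 0 := by
  have hderiv : HasDerivAt (fun y => Real.sin (α * y + γ)) (Real.cos (α * x + γ) * α) x := by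
    simpa using (((hasDerivAt_id x).const_mul α).add_const γ).sin
  have hcos : Real.cos (α * x + γ) * α = 0 :=
    hderiv.unique ((hasDerivAt_const x 0).congr_of_eventuallyEq h)
  have hsin : Real.sin (α * x + γ) = 0 := h.self_of_nhds
  have hpyth := Real.sin_sq_add_cos_sq (α * x + γ)
  rcases mul_eq_zero.1 hcos with hc | hα
  · rw [hsin, hc] at hpyth
    norm_num at hpyth
  · exact hα

lemma eq_zero_of_eventually_sin_affine_sq_eq {α γ v x : ℝ}
    (h : ∀ᶠ y in 𝓝 x, Real.sin (α * y + γ) ^ 2 = v) : α = 0 := by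
  by_contra hα
  suffices ∀ᶠ y in 𝓝 x, Real.sin (2 * α * y + 2 * γ) = 0 from
    hα (by linarith [eq_zero_of_eventually_sin_affine_eq_zero this])
  filter_upwards [eventually_eventually_nhds.2 h] with y hy
  have hderiv : HasDerivAt (fun y => Real.sin (α * y + γ) ^ 2)
      (2 * Real.sin (α * y + γ) * (Real.cos (α * y + γ) * α)) y := by
    simpa using ((((hasDerivAt_id y).const_mul α).add_const γ).sin).fun_pow 2
  have hzero := hderiv.unique ((hasDerivAt_const y v).congr_of_eventuallyEq hy)
  rw [show 2 * α * y + 2 * γ = 2 * (α * y + γ) by ring, Real.sin_two_mul]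
  have : 2 * Real.sin (α * y + γ) * Real.cos (α * y + γ) * α = 0 := by linarith
  exact (mul_eq_zero.1 this).resolve_right hα

lemma forall_even_le_abs_of_eventually_pden_eq {N : ℕ} (hN : 0 < N) (a : ℤ) {q : ℕ}
    {Λ x v : ℝ} (hq : 0 < q) (h4 : 4 ∣ q) (hΛ : (q : ℝ) / 2 < Λ)
    (hv : ∀ᶠ y in 𝓝 x, pden N q Λ a y = v) (k : ℤ) (hk : Even k) :
    (q : ℝ) / (2 * Λ) ≤ |x * q - k| := by
  by_contra! hlt
  have hq' : (0 : ℝ) < q := Nat.cast_pos.2 hq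
  have hΛ₀ : 0 < Λ := by linarith
  have hnear : ∀ᶠ y : ℝ in 𝓝 x, |y * q - k| < q / (2 * Λ) :=
    (by fun_prop : Continuous fun y : ℝ => |y * q - k|).continuousAt.eventually_lt
      continuousAt_const hlt
  have hsin : ∀ᶠ y : ℝ in 𝓝 x,
      Real.sin (2 * Real.pi * N * Λ * y + -(2 * Real.pi * N * Λ * k / q)) ^ 2
        = q / (8 * Λ) * v := by
    filter_upwards [hv, hnear] with y hy hy'
    rw [← hy, pden_eq_sin_sq N a h4 hΛ hk hy'.le]
    field_simp
    ring_nf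
  have := eq_zero_of_eventually_sin_affine_sq_eq hsin
  have : (0 : ℝ) < 2 * Real.pi * N * Λ := by positivity
  linarith

lemma le_abs_sub_of_even_of_abs_sub_odd_le {y r : ℝ} {m k : ℤ} (h : |y - (2 * m + 1)| ≤ 1 - r)
    (hk : Even k) : r ≤ |y - k| := by
  have hkm : (1 : ℝ) ≤ |(k : ℝ) - (2 * m + 1)| := by
    obtain ⟨c, rfl⟩ := hk
    have : (1 : ℤ) ≤ |c + c - (2 * m + 1)| := by rw [le_abs]; omega
    exact_mod_cast this
  linarith [abs_sub_le (k : ℝ) y (2 * m + 1), abs_sub_comm (k : ℝ) y]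

lemma exists_abs_sub_odd_le_of_forall_even_le {s : Set ℝ} (hs : IsPreconnected s)
    (hne : s.Nonempty) {r : ℝ} (hr : 0 < r) (hfar : ∀ y ∈ s, ∀ k : ℤ, Even k → r ≤ |y - k|) :
    ∃ m : ℤ, ∀ y ∈ s, |y - (2 * m + 1)| ≤ 1 - r := by
  obtain ⟨y₀, hy₀⟩ := hne
  have hnot_mem (k : ℤ) (hk : Even k) : (k : ℝ) ∉ s := fun hks => by
    simpa using hr.trans_le (hfar k hks k hk)
  have hlow : 2 * (⌊y₀ / 2⌋ : ℝ) ≤ y₀ := by linarith [Int.floor_le (y₀ / 2)]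
  have hhigh : y₀ < 2 * (⌊y₀ / 2⌋ : ℝ) + 2 := by linarith [Int.lt_floor_add_one (y₀ / 2)]
  refine ⟨⌊y₀ / 2⌋, fun y hy => ?_⟩
  set m := ⌊y₀ / 2⌋
  have hgt : 2 * (m : ℝ) < y := by
    by_contra! h
    exact hnot_mem (2 * m) (even_two_mul m) (by push_cast; exact hs.Icc_subset hy hy₀ ⟨h, hlow⟩)
  have hlt : y < 2 * (m : ℝ) + 2 := by
    by_contra! h
    exact hnot_mem (2 * m + 2) ⟨m + 1, by ring⟩
      (by push_cast; exact hs.Icc_subset hy₀ hy ⟨hhigh.le, h⟩)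
  have h₁ := hfar y hy (2 * m) (even_two_mul m)
  have h₂ := hfar y hy (2 * m + 2) ⟨m + 1, by ring⟩
  push_cast at h₁ h₂
  rw [abs_of_pos (by linarith)] at h₁
  rw [abs_of_neg (by linarith)] at h₂
  rw [abs_le]
  constructor <;> linarith

lemma mem_Icc_odd_band_iff {q : ℝ} (hq : 0 < q) (Λ c x : ℝ) :
    x ∈ Icc (c / q - (1 / q - 1 / (2 * Λ))) (c / q + (1 / q - 1 / (2 * Λ))) ↔
      |x * q - c| ≤ 1 - q / (2 * Λ) := by
  have hlow : c / q - (1 / q - 1 / (2 * Λ)) = (c - (1 - q / (2 * Λ))) / q := by field_simp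
  have hupp : c / q + (1 / q - 1 / (2 * Λ)) = (c + (1 - q / (2 * Λ))) / q := by field_simp
  rw [hlow, hupp, mem_Icc, div_le_iff₀ hq, le_div_iff₀ hq, abs_le]
  constructor <;> rintro ⟨h₁, h₂⟩ <;> constructor <;> linarith

theorem stmt8_general (Λ : ℝ) (N : ℕ) (hN : 0 < N) (a : ℤ) (q : ℕ)
    (hq : 0 < q) (h4 : 4 ∣ q) (hfrag : (q : ℝ) / 2 < Λ) :
    (∀ m : ℤ, 0 ≤ m → (m : ℝ) < (q : ℝ) / 4 →
      ∀ x ∈ Set.Icc ((2 * (m : ℝ) + 1) / q - (1 / q - 1 / (2 * Λ)))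
          ((2 * (m : ℝ) + 1) / q + (1 / q - 1 / (2 * Λ))) ∩ Set.Icc (0 : ℝ) (1 / 2),
        pden N q Λ a x = 0) ∧
    (∀ l u : ℝ, l < u → Set.Ioo l u ⊆ Set.Ioo (0 : ℝ) (1 / 2) →
      (∃ v : ℝ, ∀ x ∈ Set.Ioo l u, pden N q Λ a x = v) →
      (∃ m : ℤ, 0 ≤ m ∧ (m : ℝ) < (q : ℝ) / 4 ∧
        Set.Ioo l u ⊆ Set.Icc ((2 * (m : ℝ) + 1) / q - (1 / q - 1 / (2 * Λ)))
          ((2 * (m : ℝ) + 1) / q + (1 / q - 1 / (2 * Λ)))) ∧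
      ∀ x ∈ Set.Ioo l u, pden N q Λ a x = 0) := by
  have hq' : (0 : ℝ) < q := Nat.cast_pos.2 hq
  have hΛ : 0 < Λ := by linarith
  have hr : (0 : ℝ) < q / (2 * Λ) := by positivity
  refine ⟨fun m _ _ x hx => pden_eq_zero_of_forall_even_le N a hq hΛ h4 fun k hk =>
    le_abs_sub_of_even_of_abs_sub_odd_le ((mem_Icc_odd_band_iff hq' Λ _ x).1 hx.1) hk,
    fun l u hlu hsub ⟨v, hv⟩ => ?_⟩
  have hfar (x : ℝ) (hx : x ∈ Ioo l u) (k : ℤ) (hk : Even k) : (q : ℝ) / (2 * Λ) ≤ |x * q - k| :=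
    forall_even_le_abs_of_eventually_pden_eq hN a hq h4 hfrag
      (eventually_of_mem (Ioo_mem_nhds hx.1 hx.2) hv) k hk
  obtain ⟨m, hm⟩ := exists_abs_sub_odd_le_of_forall_even_le
    (isPreconnected_Ioo.image _ (continuous_mul_const (q : ℝ)).continuousOn)
    ((nonempty_Ioo.2 hlu).image _) hr (by simpa only [forall_mem_image] using hfar)
  replace hm (x : ℝ) (hx : x ∈ Ioo l u) := hm (x * q) ⟨x, hx, rfl⟩
  obtain ⟨x, hx⟩ := nonempty_Ioo.2 hlu
  have hxm := abs_le.1 (hm x hx)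
  have hxq : 0 < x * q ∧ x * q < q / 2 := by
    constructor <;> nlinarith [(hsub hx).1, (hsub hx).2]
  have hm₀ : (-1 : ℤ) < m := by exact_mod_cast (by linarith : (-1 : ℝ) < m)
  refine ⟨⟨m, by omega, by linarith,
    fun y hy => (mem_Icc_odd_band_iff hq' Λ _ y).2 (hm y hy)⟩,
    fun y hy => pden_eq_zero_of_forall_even_le N a hq hΛ h4 (hfar y hy)⟩

theorem stmt8 (Λ : ℝ) (hΛ : 1 < Λ) (N : ℕ) (hN : 0 < N) (a : ℤ) (q : ℕ)
    (hq : 0 < q) (hcop : Int.gcd a q = 1) (h4 : 4 ∣ q) (hfrag : (q : ℝ) / 2 < Λ) :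
    (∀ m : ℤ, 0 ≤ m → (m : ℝ) < (q : ℝ) / 4 →
      ∀ x ∈ Set.Icc ((2 * (m : ℝ) + 1) / q - (1 / q - 1 / (2 * Λ)))
          ((2 * (m : ℝ) + 1) / q + (1 / q - 1 / (2 * Λ))) ∩ Set.Icc (0 : ℝ) (1 / 2),
        pden N q Λ a x = 0) ∧
    (∀ l u : ℝ, l < u → Set.Ioo l u ⊆ Set.Ioo (0 : ℝ) (1 / 2) →
      (∃ v : ℝ, ∀ x ∈ Set.Ioo l u, pden N q Λ a x = v) →
      (∃ m : ℤ, 0 ≤ m ∧ (m : ℝ) < (q : ℝ) / 4 ∧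
        Set.Ioo l u ⊆ Set.Icc ((2 * (m : ℝ) + 1) / q - (1 / q - 1 / (2 * Λ)))
          ((2 * (m : ℝ) + 1) / q + (1 / q - 1 / (2 * Λ)))) ∧
      ∀ x ∈ Set.Ioo l u, pden N q Λ a x = 0) :=
  stmt8_general Λ N hN a q hq h4 hfrag
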